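/- arXiv:1208.5273 — 2 statements merged into one kernel-verified Lean document; each statement's English description precedes it below -/
import Mathlib

section
/- Upper bound on the shift. Let f, g ∈ Ψ be (0,1)-interpolating, let ω be an averaging kernel with cumulative function Ω(x) = ∫_{−∞}^x ω(y) dy and right-continuous generalized inverse Ω⁻¹(p+) = sup{x : Ω(x) ≤ p}, let α ∈ ℝ, and let (hf, hg) ∈ 𝒳² be such that (f, g) is a consistent travelling-wave solution with shift α. If (u, v) ∈ [0,1]² satisfies v < hf(u−) and u < hg(v−), then α ≤ Ω⁻¹((v/hf(u−))+) + Ω⁻¹((u/hg(v−))+). If (u, v) ∈ [0,1]² satisfies v > hf(u+) and u > hg(v+), then −α ≤ Ω⁻¹(((1−v)/(1−hf(u+)))+) + Ω⁻¹(((1−u)/(1−hg(v+)))+). -/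
/-!
Let `s` be the point where `f ⊗ ω` crosses the level `v`. Beyond `s` the wave equation for
`g` gives `g ≥ hg(v−)`, hence `(g ⊗ ω)(y) ≥ hg(v−) Ω(y − s)`, which exceeds `u` once
`y − s > Ω⁻¹((u/hg(v−))+)`. The wave equation for `f` then gives `f ≥ hf(u−)` beyond
`s − α + Ω⁻¹((u/hg(v−))+)`, and by the same argument `f ⊗ ω > v` beyond
`s − α + Ω⁻¹((u/hg(v−))+) + Ω⁻¹((v/hf(u−))+)`. As `f ⊗ ω < v` left of `s`, this point is at
least `s`, which is the first bound. The second one is the first for the reflected wave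
`(1 − f(−·), 1 − g(−·))`.
-/

open MeasureTheory Filter Set

noncomputable section

/-- Convolution `(f ⊗ ω)(x) = ∫ y, f y · ω (x − y)`. -/
def conv (f ω : ℝ → ℝ) (x : ℝ) : ℝ := ∫ y : ℝ, f y * ω (x - y)

/-- `ω` is an averaging kernel: even, nonnegative, of bounded variation, integrating to 1. -/
def IsAveragingKernel (ω : ℝ → ℝ) : Prop :=
  (∀ x, ω (-x) = ω x) ∧ (∀ x, 0 ≤ ω x) ∧ BoundedVariationOn ω Set.univ ∧
    MeasureTheory.Integrable ω ∧ (∫ x : ℝ, ω x) = 1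

/-- The essential supremum `‖ω‖∞` of a kernel, as a real number. -/
def kerSup (ω : ℝ → ℝ) : ℝ := (eLpNorm ω ⊤ MeasureTheory.volume).toReal

/-- `ω` is regular: for some `W ∈ (0,∞]`, it vanishes outside `[−W, W]` and is
positive on `(−W, W)` (the case `W = ∞` being that `ω` is everywhere positive). -/
def IsRegularKernel (ω : ℝ → ℝ) : Prop :=
  (∀ x, 0 < ω x) ∨
    ∃ W : ℝ, 0 < W ∧ (∀ x, W < |x| → ω x = 0) ∧ (∀ x, |x| < W → 0 < ω x)

/-- Membership in `𝒳`: nondecreasing self-maps of `[0,1]`. -/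
def MemX (h : ℝ → ℝ) : Prop :=
  MonotoneOn h (Icc 0 1) ∧ MapsTo h (Icc 0 1) (Icc 0 1)

/-- Left limit `h(u−)` of `h ∈ 𝒳` at `u ∈ [0,1]`, with the convention `h(0−) = 0`. -/
def lm (h : ℝ → ℝ) (u : ℝ) : ℝ := if u ≤ 0 then 0 else sSup (h '' Ico 0 u)

/-- Right limit `h(u+)` of `h ∈ 𝒳` at `u ∈ [0,1]`, with the convention `h(1+) = 1`. -/
def rm (h : ℝ → ℝ) (u : ℝ) : ℝ := if 1 ≤ u then 1 else sInf (h '' Ioc u 1)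

/-- A canonical generalized inverse of `h ∈ 𝒳` (any valid inverse has the same integrals,
so the potential below is unambiguous). -/
def Xinv (h : ℝ → ℝ) (v : ℝ) : ℝ := sInf ({1} ∪ {u ∈ Icc (0:ℝ) 1 | v ≤ h u})

/-- The potential `Φ(hf, hg; u, v) = ∫₀ᵘ hg⁻¹ + ∫₀ᵛ hf⁻¹ − u·v`. -/
def Pot (hf hg : ℝ → ℝ) (u v : ℝ) : ℝ :=
  (∫ x in (0:ℝ)..u, Xinv hg x) + (∫ x in (0:ℝ)..v, Xinv hf x) - u * v

/-- `A(hf, hg) = Φ(hf, hg; 1, 1)`. -/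
def Agap (hf hg : ℝ → ℝ) : ℝ := Pot hf hg 1 1

/-- `(u,v)` is a crossing point of `(hf, hg)`:
`u ∈ [hg(v−), hg(v+)]` and `v ∈ [hf(u−), hf(u+)]`. -/
def IsCrossing (hf hg : ℝ → ℝ) (u v : ℝ) : Prop :=
  u ∈ Icc (0:ℝ) 1 ∧ v ∈ Icc (0:ℝ) 1 ∧
    u ∈ Icc (lm hg v) (rm hg v) ∧ v ∈ Icc (lm hf u) (rm hf u)

/-- The strictly positive gap condition: there is a nontrivial crossing point, and every
nontrivial crossing point satisfies `Φ(hf, hg; u, v) > max {0, A(hf, hg)}`. -/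
def StrictPosGap (hf hg : ℝ → ℝ) : Prop :=
  (∃ u v, IsCrossing hf hg u v ∧ ¬(u = 0 ∧ v = 0) ∧ ¬(u = 1 ∧ v = 1)) ∧
    ∀ u v, IsCrossing hf hg u v → ¬(u = 0 ∧ v = 0) → ¬(u = 1 ∧ v = 1) →
      max 0 (Agap hf hg) < Pot hf hg u v

/-- Membership in `Ψ`: nondecreasing functions `ℝ → [0,1]`. -/
def MemPsi (f : ℝ → ℝ) : Prop := Monotone f ∧ ∀ x, f x ∈ Icc (0:ℝ) 1

/-- `f` is `(a,b)`-interpolating: limits `a` at `−∞` and `b` at `+∞`. -/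
def Interpolates (f : ℝ → ℝ) (a b : ℝ) : Prop :=
  Filter.Tendsto f Filter.atBot (nhds a) ∧ Filter.Tendsto f Filter.atTop (nhds b)

/-- `(f, g)` is a consistent travelling-wave solution with shift `α` for `(hf, hg)`
and kernel `ω`. -/
def ConsistentWave (hf hg f g ω : ℝ → ℝ) (α : ℝ) : Prop :=
  (∀ x, f x ∈ Icc (lm hf (conv g ω (x + α))) (rm hf (conv g ω (x + α)))) ∧
    (∀ x, g x ∈ Icc (lm hg (conv f ω x)) (rm hg (conv f ω x)))

/-- `Ω(x) = ∫_{−∞}^x ω(y) dy`. -/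
def Omg (ω : ℝ → ℝ) (x : ℝ) : ℝ := ∫ y in Iio x, ω y

/-- The right-continuous generalized inverse `Ω⁻¹(p+) = sup {x : Ω(x) ≤ p}`. -/
def OmgInv (ω : ℝ → ℝ) (p : ℝ) : ℝ := sSup {x | Omg ω x ≤ p}

open Topology

namespace IsAveragingKernel

variable {ω : ℝ → ℝ}

lemma even (hω : IsAveragingKernel ω) (x : ℝ) : ω (-x) = ω x := hω.1 x

lemma nonneg (hω : IsAveragingKernel ω) (x : ℝ) : 0 ≤ ω x := hω.2.1 x

lemma integrable (hω : IsAveragingKernel ω) : Integrable ω := hω.2.2.2.1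

lemma integral_eq_one (hω : IsAveragingKernel ω) : ∫ x, ω x = 1 := hω.2.2.2.2

end IsAveragingKernel

namespace MemPsi

variable {f : ℝ → ℝ}

lemma measurable (hf : MemPsi f) : Measurable f := hf.1.measurable

lemma nonneg (hf : MemPsi f) (x : ℝ) : 0 ≤ f x := (hf.2 x).1

lemma le_one (hf : MemPsi f) (x : ℝ) : f x ≤ 1 := (hf.2 x).2

lemma one_sub_comp_neg (hf : MemPsi f) : MemPsi (fun x => 1 - f (-x)) :=
  ⟨fun _ _ hxy => sub_le_sub_left (hf.1 (neg_le_neg hxy)) 1,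
    fun _ => ⟨sub_nonneg.2 (hf.le_one _), sub_le_self _ (hf.nonneg _)⟩⟩

end MemPsi

lemma Interpolates.one_sub_comp_neg {f : ℝ → ℝ} {a b : ℝ} (hf : Interpolates f a b) :
    Interpolates (fun x => 1 - f (-x)) (1 - b) (1 - a) :=
  ⟨(hf.2.comp tendsto_neg_atBot_atTop).const_sub 1,
    (hf.1.comp tendsto_neg_atTop_atBot).const_sub 1⟩

lemma integrable_mul_of_mem_Icc {φ k : ℝ → ℝ} (hk : Integrable k) (hφ : Measurable φ)
    (hφ01 : ∀ t, φ t ∈ Icc (0 : ℝ) 1) : Integrable (fun t => φ t * k t) :=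
  hk.bdd_mul hφ.aestronglyMeasurable (c := 1) <| ae_of_all _ fun t => by
    rw [Real.norm_eq_abs, abs_of_nonneg (hφ01 t).1]
    exact (hφ01 t).2

section Convolution

variable {ω f : ℝ → ℝ}

lemma conv_eq_integral_comp_sub (x : ℝ) : conv f ω x = ∫ t, f (x - t) * ω t := by
  rw [conv, ← integral_sub_left_eq_self _ volume x]
  simp

lemma integrable_comp_sub_mul (hω : IsAveragingKernel ω) (hf : MemPsi f) (x : ℝ) :
    Integrable (fun t => f (x - t) * ω t) :=
  integrable_mul_of_mem_Icc hω.integrable (hf.measurable.comp (measurable_const.sub measurable_id))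
    fun _ => hf.2 _

lemma conv_nonneg (hω : IsAveragingKernel ω) (hf : MemPsi f) (x : ℝ) : 0 ≤ conv f ω x :=
  integral_nonneg fun y => mul_nonneg (hf.nonneg y) (hω.nonneg _)

lemma conv_le_one (hω : IsAveragingKernel ω) (hf : MemPsi f) (x : ℝ) : conv f ω x ≤ 1 := by
  rw [conv_eq_integral_comp_sub, ← hω.integral_eq_one]
  exact integral_mono (integrable_comp_sub_mul hω hf x) hω.integrable
    fun t => mul_le_of_le_one_left (hω.nonneg t) (hf.le_one _)

lemma conv_mono (hω : IsAveragingKernel ω) (hf : MemPsi f) : Monotone (conv f ω) := by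
  intro x₁ x₂ hx
  simp only [conv_eq_integral_comp_sub]
  exact integral_mono (integrable_comp_sub_mul hω hf x₁) (integrable_comp_sub_mul hω hf x₂)
    fun t => mul_le_mul_of_nonneg_right (hf.1 (sub_le_sub_right hx t)) (hω.nonneg t)

lemma tendsto_conv {l : Filter ℝ} [l.IsCountablyGenerated] {c : ℝ}
    (hl : ∀ t, Tendsto (fun x => x - t) l l) (hω : IsAveragingKernel ω) (hf : MemPsi f)
    (hfc : Tendsto f l (𝓝 c)) : Tendsto (conv f ω) l (𝓝 c) := by
  have key := tendsto_integral_filter_of_dominated_convergence (l := l) (μ := volume)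
    (F := fun x t => f (x - t) * ω t) (f := fun t => c * ω t) ω
    (Eventually.of_forall fun x => (integrable_comp_sub_mul hω hf x).aestronglyMeasurable)
    (Eventually.of_forall fun x => ae_of_all _ fun t => by
      rw [Real.norm_eq_abs, abs_of_nonneg (mul_nonneg (hf.nonneg _) (hω.nonneg t))]
      exact mul_le_of_le_one_left (hω.nonneg t) (hf.le_one _))
    hω.integrable (ae_of_all _ fun t => (hfc.comp (hl t)).mul_const (ω t))
  rw [integral_const_mul, hω.integral_eq_one, mul_one] at key
  exact key.congr fun x => (conv_eq_integral_comp_sub x).symm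

lemma conv_one_sub_comp_neg (hω : IsAveragingKernel ω) (hf : MemPsi f) (x : ℝ) :
    conv (fun y => 1 - f (-y)) ω x = 1 - conv f ω (-x) := by
  have hshift : Integrable (fun t => f (t - x) * ω t) :=
    integrable_mul_of_mem_Icc hω.integrable (hf.measurable.comp (measurable_id.sub_const x))
      fun _ => hf.2 _
  have hreflect : ∫ t, f (-x - t) * ω t = ∫ t, f (t - x) * ω t := by
    rw [← integral_neg_eq_self]
    simp only [hω.even, sub_neg_eq_add, neg_add_eq_sub]
  simp only [conv_eq_integral_comp_sub, hreflect, sub_mul, one_mul, neg_sub]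
  rw [integral_sub hω.integrable hshift, hω.integral_eq_one]

end Convolution

section CumulativeKernel

variable {ω : ℝ → ℝ}

lemma Omg_mono (hω : IsAveragingKernel ω) : Monotone (Omg ω) := fun _ _ hx =>
  setIntegral_mono_set hω.integrable.integrableOn (ae_of_all _ hω.nonneg)
    (Iio_subset_Iio hx).eventuallyLE

lemma tendsto_Omg_atTop (hω : IsAveragingKernel ω) : Tendsto (Omg ω) atTop (𝓝 1) := by
  have key := tendsto_setIntegral_of_monotone (μ := volume) (s := fun r : ℝ => Iio r)
    (fun _ => measurableSet_Iio) (fun _ _ hxy => Iio_subset_Iio hxy)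
    (by rw [iUnion_Iio]; exact hω.integrable.integrableOn)
  rwa [iUnion_Iio, Measure.restrict_univ, hω.integral_eq_one] at key

lemma lt_Omg_of_OmgInv_lt (hω : IsAveragingKernel ω) {p t : ℝ} (hp : p < 1)
    (ht : OmgInv ω p < t) : p < Omg ω t := by
  by_contra! hle
  obtain ⟨t₀, ht₀⟩ := ((tendsto_Omg_atTop hω).eventually (eventually_gt_nhds hp)).exists
  have hbdd : BddAbove {x | Omg ω x ≤ p} := ⟨t₀, fun x hx =>
    le_of_not_gt fun hx₀ => (ht₀.trans_le (Omg_mono hω hx₀.le)).not_ge hx⟩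
  exact (le_csSup hbdd hle).not_gt ht

lemma mul_Omg_le_conv (hω : IsAveragingKernel ω) {g : ℝ → ℝ} (hg : MemPsi g) {s c : ℝ}
    (hgc : ∀ x, s < x → c ≤ g x) (y : ℝ) : c * Omg ω (y - s) ≤ conv g ω y := by
  rw [conv_eq_integral_comp_sub, Omg, ← integral_const_mul,
    ← integral_indicator measurableSet_Iio]
  refine integral_mono ((hω.integrable.const_mul c).indicator measurableSet_Iio)
    (integrable_comp_sub_mul hω hg y) fun t => ?_
  by_cases ht : t < y - s
  · rw [indicator_of_mem (show t ∈ Iio (y - s) from ht)]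
    exact mul_le_mul_of_nonneg_right (hgc _ (by linarith)) (hω.nonneg t)
  · rw [indicator_of_notMem (show t ∉ Iio (y - s) from ht)]
    exact mul_nonneg (hg.nonneg _) (hω.nonneg t)

lemma lt_conv_of_OmgInv_lt (hω : IsAveragingKernel ω) {g : ℝ → ℝ} (hg : MemPsi g)
    {s c p y : ℝ} (hc : 0 < c) (hpc : p < c) (hgc : ∀ x, s < x → c ≤ g x)
    (hy : OmgInv ω (p / c) < y - s) : p < conv g ω y := by
  have hp : p / c < Omg ω (y - s) := lt_Omg_of_OmgInv_lt hω ((div_lt_one hc).2 hpc) hy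
  calc p < c * Omg ω (y - s) := (div_lt_iff₀' hc).1 hp
    _ ≤ conv g ω y := mul_Omg_le_conv hω hg hgc y

end CumulativeKernel

lemma Monotone.exists_crossing {F : ℝ → ℝ} (hF : Monotone F) {v : ℝ} (hlo : ∃ x, F x < v)
    (hhi : ∃ x, v ≤ F x) : ∃ s, (∀ x, s < x → v ≤ F x) ∧ ∀ x, v ≤ F x → s ≤ x := by
  obtain ⟨x₀, hx₀⟩ := hlo
  have hbdd : BddBelow {x | v ≤ F x} :=
    ⟨x₀, fun x hx => le_of_not_gt fun hlt => (hx.trans (hF hlt.le)).not_gt hx₀⟩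
  refine ⟨sInf {x | v ≤ F x}, fun x hx => ?_, fun x hx => csInf_le hbdd hx⟩
  obtain ⟨x', hx', hx'x⟩ := (csInf_lt_iff hbdd hhi).1 hx
  exact hx'.trans (hF hx'x.le)

section OneSidedLimits

variable {h : ℝ → ℝ}

lemma lm_mono (hh : MemX h) {w w' : ℝ} (hw : w ≤ w') (hw' : w' ≤ 1) : lm h w ≤ lm h w' := by
  have hbdd : BddAbove (h '' Ico 0 w') :=
    ⟨1, forall_mem_image.2 fun t ht => (hh.2 ⟨ht.1, ht.2.le.trans hw'⟩).2⟩
  unfold lm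
  split_ifs with h₀ h₀'
  · exact le_rfl
  · exact (hh.2 ⟨le_rfl, zero_le_one⟩).1.trans (le_csSup hbdd ⟨0, ⟨le_rfl, by linarith⟩, rfl⟩)
  · linarith
  · exact csSup_le_csSup hbdd ⟨h 0, 0, ⟨le_rfl, by linarith⟩, rfl⟩
      (image_mono (Ico_subset_Ico_right hw))

lemma lm_le_one (hh : MemX h) {w : ℝ} (hw : w ≤ 1) : lm h w ≤ 1 := by
  unfold lm
  split_ifs with h₀
  · exact zero_le_one
  · exact csSup_le ⟨h 0, 0, ⟨le_rfl, by linarith⟩, rfl⟩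
      (forall_mem_image.2 fun t ht => (hh.2 ⟨ht.1, ht.2.le.trans hw⟩).2)

lemma rm_mono (hh : MemX h) {w w' : ℝ} (hw₀ : 0 ≤ w) (hw : w ≤ w') : rm h w ≤ rm h w' := by
  have hbdd : BddBelow (h '' Ioc w 1) :=
    ⟨0, forall_mem_image.2 fun t ht => (hh.2 ⟨hw₀.trans ht.1.le, ht.2⟩).1⟩
  unfold rm
  split_ifs with h₁ h₁'
  · exact le_rfl
  · linarith
  · exact (csInf_le hbdd ⟨1, ⟨by linarith, le_rfl⟩, rfl⟩).trans (hh.2 ⟨zero_le_one, le_rfl⟩).2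
  · exact csInf_le_csInf hbdd ⟨h 1, 1, ⟨by linarith, le_rfl⟩, rfl⟩
      (image_mono (Ioc_subset_Ioc_left hw))

lemma rm_nonneg (hh : MemX h) {w : ℝ} (hw : 0 ≤ w) : 0 ≤ rm h w := by
  unfold rm
  split_ifs with h₁
  · exact zero_le_one
  · exact le_csInf ⟨h 1, 1, ⟨by linarith, le_rfl⟩, rfl⟩
      (forall_mem_image.2 fun t ht => (hh.2 ⟨hw.trans ht.1.le, ht.2⟩).1)

lemma pos_of_lt_lm {u v : ℝ} (hu : 0 ≤ u) (huv : u < lm h v) : 0 < v := by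
  by_contra! hv
  rw [lm, if_pos hv] at huv
  linarith

lemma lt_one_of_rm_lt {u v : ℝ} (hu : u ≤ 1) (huv : rm h v < u) : v < 1 := by
  by_contra! hv
  rw [rm, if_pos hv] at huv
  linarith

end OneSidedLimits

lemma shift_le_of_wave_bounds {ω f g : ℝ → ℝ} {α u v a b : ℝ} (hω : IsAveragingKernel ω)
    (hf : MemPsi f) (hg : MemPsi g) (hfI : Interpolates f 0 1)
    (hv : 0 < v) (hva : v < a) (hv1 : v < 1) (hu : 0 ≤ u) (hub : u < b)
    (hgb : ∀ x, v ≤ conv f ω x → b ≤ g x) (hfa : ∀ x, u ≤ conv g ω (x + α) → a ≤ f x) :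
    α ≤ OmgInv ω (v / a) + OmgInv ω (u / b) := by
  have ha : 0 < a := hv.trans hva
  have hb : 0 < b := hu.trans_lt hub
  obtain ⟨x_lo, h_lo⟩ := ((tendsto_conv (fun t => tendsto_atBot_add_const_right _ (-t) tendsto_id)
    hω hf hfI.1).eventually (eventually_lt_nhds hv)).exists
  obtain ⟨x_hi, h_hi⟩ := ((tendsto_conv (fun t => tendsto_atTop_add_const_right _ (-t) tendsto_id)
    hω hf hfI.2).eventually (eventually_gt_nhds hv1)).exists
  obtain ⟨s, hs_right, hs_left⟩ := (conv_mono hω hf).exists_crossing ⟨x_lo, h_lo⟩ ⟨x_hi, h_hi.le⟩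
  set t := s - α + OmgInv ω (u / b)
  have hg_ge : ∀ x, s < x → b ≤ g x := fun x hx => hgb x (hs_right x hx)
  have hf_ge : ∀ x, t < x → a ≤ f x := fun x hx =>
    hfa x (lt_conv_of_OmgInv_lt hω hg hb hub hg_ge (by linarith)).le
  have hs : s ≤ t + OmgInv ω (v / a) := le_of_forall_gt_imp_ge_of_dense fun y hy =>
    hs_left y (lt_conv_of_OmgInv_lt hω hf ha hva hf_ge (by linarith)).le
  linarith

namespace ConsistentWave

variable {hf hg f g ω : ℝ → ℝ} {α : ℝ}

lemma shift_le (hwave : ConsistentWave hf hg f g ω α) (hω : IsAveragingKernel ω)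
    (hhf : MemX hf) (hhg : MemX hg) (hfΨ : MemPsi f) (hgΨ : MemPsi g)
    (hfI : Interpolates f 0 1) {u v : ℝ} (hu : u ∈ Icc (0 : ℝ) 1)
    (hvu : v < lm hf u) (huv : u < lm hg v) :
    α ≤ OmgInv ω (v / lm hf u) + OmgInv ω (u / lm hg v) :=
  shift_le_of_wave_bounds hω hfΨ hgΨ hfI (pos_of_lt_lm hu.1 huv) hvu
    (hvu.trans_le (lm_le_one hhf hu.2)) hu.1 huv
    (fun x hx => (lm_mono hhg hx (conv_le_one hω hfΨ x)).trans (hwave.2 x).1)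
    (fun x hx => (lm_mono hhf hx (conv_le_one hω hgΨ (x + α))).trans (hwave.1 x).1)

lemma neg_shift_le (hwave : ConsistentWave hf hg f g ω α) (hω : IsAveragingKernel ω)
    (hhf : MemX hf) (hhg : MemX hg) (hfΨ : MemPsi f) (hgΨ : MemPsi g)
    (hfI : Interpolates f 0 1) {u v : ℝ} (hu : u ∈ Icc (0 : ℝ) 1)
    (hvu : rm hf u < v) (huv : rm hg v < u) :
    -α ≤ OmgInv ω ((1 - v) / (1 - rm hf u)) + OmgInv ω ((1 - u) / (1 - rm hg v)) := by
  have hv1 : v < 1 := lt_one_of_rm_lt hu.2 huv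
  refine shift_le_of_wave_bounds hω hfΨ.one_sub_comp_neg hgΨ.one_sub_comp_neg
    (by simpa using hfI.one_sub_comp_neg) (by linarith) (by linarith)
    (by linarith [rm_nonneg hhf hu.1]) (by linarith [hu.2]) (by linarith)
    (fun x hx => ?_) (fun x hx => ?_)
  · rw [conv_one_sub_comp_neg hω hfΨ] at hx
    have hle := rm_mono hhg (conv_nonneg hω hfΨ (-x)) (by linarith : conv f ω (-x) ≤ v)
    linarith [(hwave.2 (-x)).2]
  · rw [conv_one_sub_comp_neg hω hgΨ, show -(x + -α) = -x + α by ring] at hx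
    have hle := rm_mono hhf (conv_nonneg hω hgΨ (-x + α)) (by linarith : conv g ω (-x + α) ≤ u)
    linarith [(hwave.1 (-x)).2]

end ConsistentWave

theorem shift_upper_bound_general
    (ω hf hg f g : ℝ → ℝ) (α : ℝ)
    (hω : IsAveragingKernel ω)
    (hhf : MemX hf) (hhg : MemX hg)
    (hfΨ : MemPsi f) (hgΨ : MemPsi g)
    (hfI : Interpolates f 0 1)
    (hwave : ConsistentWave hf hg f g ω α) :
    (∀ u ∈ Icc (0:ℝ) 1, ∀ v ∈ Icc (0:ℝ) 1, v < lm hf u → u < lm hg v →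
      α ≤ OmgInv ω (v / lm hf u) + OmgInv ω (u / lm hg v)) ∧
    (∀ u ∈ Icc (0:ℝ) 1, ∀ v ∈ Icc (0:ℝ) 1, rm hf u < v → rm hg v < u →
      -α ≤ OmgInv ω ((1 - v) / (1 - rm hf u)) +
        OmgInv ω ((1 - u) / (1 - rm hg v))) :=
  ⟨fun _ hu _ _ hvu huv => hwave.shift_le hω hhf hhg hfΨ hgΨ hfI hu hvu huv,
    fun _ hu _ _ hvu huv => hwave.neg_shift_le hω hhf hhg hfΨ hgΨ hfI hu hvu huv⟩

/-- **Upper bound on the shift.** -/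
theorem shift_upper_bound
    (ω hf hg f g : ℝ → ℝ) (α : ℝ)
    (hω : IsAveragingKernel ω)
    (hhf : MemX hf) (hhg : MemX hg)
    (hfΨ : MemPsi f) (hgΨ : MemPsi g)
    (hfI : Interpolates f 0 1) (hgI : Interpolates g 0 1)
    (hwave : ConsistentWave hf hg f g ω α) :
    (∀ u ∈ Icc (0:ℝ) 1, ∀ v ∈ Icc (0:ℝ) 1, v < lm hf u → u < lm hg v →
      α ≤ OmgInv ω (v / lm hf u) + OmgInv ω (u / lm hg v)) ∧
    (∀ u ∈ Icc (0:ℝ) 1, ∀ v ∈ Icc (0:ℝ) 1, rm hf u < v → rm hg v < u →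
      -α ≤ OmgInv ω ((1 - v) / (1 - rm hf u)) +
        OmgInv ω ((1 - u) / (1 - rm hg v))) :=
  shift_upper_bound_general ω hf hg f g α hω hhf hhg hfΨ hgΨ hfI hwave
end
end

section
/- Crossing points are exactly the coordinatewise minimizers of the potential. Let (hf, hg) ∈ 𝒳². A pair (u, v) ∈ [0,1]² is a crossing point of (hf, hg) if and only if the function u′ ↦ Φ(hf, hg; u′, v) attains its minimum over [0,1] at u′ = u and the function v′ ↦ Φ(hf, hg; u, v′) attains its minimum over [0,1] at v′ = v. -/
open MeasureTheory Filter Set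

noncomputable section

/-! ### Auxiliary lemmas for `crossing_iff_coordinatewise_min` -/

lemma XinvSet_nonempty (h : ℝ → ℝ) (v : ℝ) :
    ({1} ∪ {u ∈ Icc (0:ℝ) 1 | v ≤ h u}).Nonempty := ⟨1, Or.inl rfl⟩

lemma XinvSet_bddBelow (h : ℝ → ℝ) (v : ℝ) :
    BddBelow ({1} ∪ {u ∈ Icc (0:ℝ) 1 | v ≤ h u}) := by
  refine ⟨0, fun x hx => ?_⟩
  rcases hx with hx | hx
  · simp only [mem_singleton_iff] at hx; simp [hx]
  · exact hx.1.1

lemma Xinv_nonneg (h : ℝ → ℝ) (v : ℝ) : 0 ≤ Xinv h v :=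
  le_csInf (XinvSet_nonempty h v) (fun x hx => by
    rcases hx with hx | hx
    · simp only [mem_singleton_iff] at hx; simp [hx]
    · exact hx.1.1)

lemma Xinv_le_one (h : ℝ → ℝ) (v : ℝ) : Xinv h v ≤ 1 :=
  csInf_le (XinvSet_bddBelow h v) (Or.inl rfl)

lemma Xinv_mono (h : ℝ → ℝ) : Monotone (Xinv h) := by
  intro a b hab
  refine csInf_le_csInf (XinvSet_bddBelow h a) (XinvSet_nonempty h b) ?_
  rintro x (hx | hx)
  · exact Or.inl hx
  · exact Or.inr ⟨hx.1, hab.trans hx.2⟩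

/-- `p ≤ rm h q` iff the generalized inverse is `≤ q` strictly left of `p`. -/
lemma claimA (h : ℝ → ℝ) (hh : MemX h) {p q : ℝ} (hp : p ∈ Icc (0:ℝ) 1)
    (hq : q ∈ Icc (0:ℝ) 1) :
    p ≤ rm h q ↔ ∀ x, 0 ≤ x → x < p → Xinv h x ≤ q := by
  unfold rm
  by_cases h1 : (1:ℝ) ≤ q
  · simp only [if_pos h1]
    constructor
    · intro _ x _ _; exact (Xinv_le_one h x).trans h1
    · intro _; exact hp.2
  · simp only [if_neg h1]
    push_neg at h1
    have hIm_ne : (h '' Ioc q 1).Nonempty := (nonempty_Ioc.2 h1).image h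
    have hIm_bdd : BddBelow (h '' Ioc q 1) := by
      refine ⟨0, ?_⟩
      rintro x ⟨t, ht, rfl⟩
      exact (hh.2 ⟨hq.1.trans ht.1.le, ht.2⟩).1
    constructor
    · intro hle x hx0 hxp
      have hxlt : x < sInf (h '' Ioc q 1) := lt_of_lt_of_le hxp hle
      have hsub : Ioc q 1 ⊆ {1} ∪ {u ∈ Icc (0:ℝ) 1 | x ≤ h u} := by
        intro t ht
        refine Or.inr ⟨⟨hq.1.trans ht.1.le, ht.2⟩, ?_⟩
        exact (hxlt.trans_le (csInf_le hIm_bdd ⟨t, ht, rfl⟩)).le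
      calc Xinv h x ≤ sInf (Ioc q 1) :=
            csInf_le_csInf (XinvSet_bddBelow h x) (nonempty_Ioc.2 h1) hsub
        _ = q := csInf_Ioc h1
    · intro hall
      refine le_csInf hIm_ne ?_
      rintro b ⟨t, ht, rfl⟩
      by_contra hcon
      push_neg at hcon
      have ht01 : t ∈ Icc (0:ℝ) 1 := ⟨hq.1.trans ht.1.le, ht.2⟩
      have hht0 : 0 ≤ h t := (hh.2 ht01).1
      set x := (h t + p) / 2 with hxdef
      have hx1 : h t < x := by simp [hxdef]; linarith
      have hx2 : x < p := by simp [hxdef]; linarith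
      have hx0 : 0 ≤ x := hht0.trans hx1.le
      have hXv : Xinv h x ≤ q := hall x hx0 hx2
      obtain ⟨s, hs, hst⟩ := exists_lt_of_csInf_lt (XinvSet_nonempty h x)
        (lt_of_le_of_lt hXv ht.1)
      rcases hs with hs | hs
      · simp only [mem_singleton_iff] at hs
        exact absurd (hs ▸ hst) (not_lt.2 ht.2)
      · have : h s ≤ h t := hh.1 hs.1 ht01 hst.le
        linarith [hs.2]

/-- `lm h q ≤ p` iff the generalized inverse is `≥ q` strictly right of `p`. -/
lemma claimB (h : ℝ → ℝ) (hh : MemX h) {p q : ℝ} (hp : p ∈ Icc (0:ℝ) 1)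
    (hq : q ∈ Icc (0:ℝ) 1) :
    lm h q ≤ p ↔ ∀ x, p < x → x ≤ 1 → q ≤ Xinv h x := by
  unfold lm
  by_cases h0 : q ≤ 0
  · simp only [if_pos h0]
    constructor
    · intro _ x _ _; exact h0.trans (Xinv_nonneg h x)
    · intro _; exact hp.1
  · simp only [if_neg h0]
    push_neg at h0
    constructor
    · intro hs x hpx hx1
      refine le_csInf (XinvSet_nonempty h x) ?_
      rintro b (hb | hb)
      · simp only [mem_singleton_iff] at hb; simp [hb, hq.2]
      · by_contra hcon
        push_neg at hcon
        have hbIco : b ∈ Ico (0:ℝ) q := ⟨hb.1.1, hcon⟩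
        have hbIm : h b ≤ sSup (h '' Ico 0 q) := by
          refine le_csSup ⟨1, ?_⟩ ⟨b, hbIco, rfl⟩
          rintro y ⟨t, ht, rfl⟩
          exact (hh.2 ⟨ht.1, ht.2.le.trans hq.2⟩).2
        have := hb.2
        linarith
    · intro hall
      refine csSup_le ((nonempty_Ico.2 h0).image h) ?_
      rintro b ⟨t, ht, rfl⟩
      by_contra hcon
      push_neg at hcon
      have ht01 : t ∈ Icc (0:ℝ) 1 := ⟨ht.1, ht.2.le.trans hq.2⟩
      have hx1 : h t ≤ 1 := (hh.2 ht01).2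
      have hq' : q ≤ Xinv h (h t) := hall (h t) hcon hx1
      have : Xinv h (h t) ≤ t :=
        csInf_le (XinvSet_bddBelow h (h t)) (Or.inr ⟨ht01, le_refl _⟩)
      linarith [ht.2]

/-- Minimality of the running integral at `p` iff sign conditions on the monotone integrand. -/
lemma lemM (φ : ℝ → ℝ) (hφ : Monotone φ) {p q : ℝ} (hp : p ∈ Icc (0:ℝ) 1) :
    (∀ p' ∈ Icc (0:ℝ) 1, 0 ≤ ∫ x in p..p', (φ x - q)) ↔
      ((∀ x, 0 ≤ x → x < p → φ x ≤ q) ∧ (∀ x, p < x → x ≤ 1 → q ≤ φ x)) := by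
  have hmono : Monotone (fun x => φ x - q) := fun a b hab => by
    simpa using sub_le_sub_right (hφ hab) q
  have hint : ∀ a b : ℝ, IntervalIntegrable (fun x => φ x - q) volume a b :=
    fun a b => hmono.intervalIntegrable
  constructor
  · intro H
    constructor
    · intro x hx0 hxp
      by_contra hc
      push_neg at hc
      have hx1 : x ∈ Icc (0:ℝ) 1 := ⟨hx0, hxp.le.trans hp.2⟩
      have h1 : (0:ℝ) ≤ ∫ t in p..x, (φ t - q) := H x hx1
      have h2 : (∫ t in x..p, (φ x - q)) ≤ ∫ t in x..p, (φ t - q) := by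
        refine intervalIntegral.integral_mono_on hxp.le
          intervalIntegrable_const (hint x p) (fun t ht => ?_)
        exact sub_le_sub_right (hφ ht.1) q
      rw [intervalIntegral.integral_const] at h2
      rw [intervalIntegral.integral_symm] at h1
      have : (p - x) • (φ x - q) > 0 := by
        rw [smul_eq_mul]; exact mul_pos (by linarith) (by linarith)
      linarith
    · intro x hpx hx1
      by_contra hc
      push_neg at hc
      have hx01 : x ∈ Icc (0:ℝ) 1 := ⟨hp.1.trans hpx.le, hx1⟩
      have h1 : (0:ℝ) ≤ ∫ t in p..x, (φ t - q) := H x hx01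
      have h2 : (∫ t in p..x, (φ t - q)) ≤ ∫ t in p..x, (φ x - q) := by
        refine intervalIntegral.integral_mono_on hpx.le (hint p x)
          intervalIntegrable_const (fun t ht => ?_)
        exact sub_le_sub_right (hφ ht.2) q
      rw [intervalIntegral.integral_const] at h2
      have : (x - p) • (φ x - q) < 0 := by
        rw [smul_eq_mul]; exact mul_neg_of_pos_of_neg (by linarith) (by linarith)
      linarith
  · rintro ⟨hL, hR⟩ p' hp'
    rcases le_or_gt p p' with hle | hlt
    · rw [intervalIntegral.integral_of_le hle,
        MeasureTheory.integral_Ioc_eq_integral_Ioo]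
      refine setIntegral_nonneg measurableSet_Ioo (fun x hx => ?_)
      exact sub_nonneg.2 (hR x hx.1 (hx.2.le.trans hp'.2))
    · rw [intervalIntegral.integral_symm, intervalIntegral.integral_of_le hlt.le,
        MeasureTheory.integral_Ioc_eq_integral_Ioo]
      rw [neg_nonneg]
      refine setIntegral_nonpos measurableSet_Ioo (fun x hx => ?_)
      exact sub_nonpos.2 (hL x (hp'.1.trans hx.1.le) hx.2)

lemma pot_diff_u (hf hg : ℝ → ℝ) (u u' v : ℝ) :
    Pot hf hg u' v - Pot hf hg u v = ∫ x in u..u', (Xinv hg x - v) := by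
  have hint : ∀ a b : ℝ, IntervalIntegrable (Xinv hg) volume a b :=
    fun a b => (Xinv_mono hg).intervalIntegrable
  have h1 : (∫ x in (0:ℝ)..u', Xinv hg x) - ∫ x in (0:ℝ)..u, Xinv hg x
      = ∫ x in u..u', Xinv hg x :=
    intervalIntegral.integral_interval_sub_left (hint 0 u') (hint 0 u)
  have h2 : (∫ x in u..u', (Xinv hg x - v))
      = (∫ x in u..u', Xinv hg x) - (u' - u) • v := by
    rw [intervalIntegral.integral_sub (hint u u') intervalIntegrable_const,
      intervalIntegral.integral_const]
  rw [h2, smul_eq_mul]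
  unfold Pot
  linarith [h1]

lemma pot_diff_v (hf hg : ℝ → ℝ) (u v v' : ℝ) :
    Pot hf hg u v' - Pot hf hg u v = ∫ y in v..v', (Xinv hf y - u) := by
  have hint : ∀ a b : ℝ, IntervalIntegrable (Xinv hf) volume a b :=
    fun a b => (Xinv_mono hf).intervalIntegrable
  have h1 : (∫ x in (0:ℝ)..v', Xinv hf x) - ∫ x in (0:ℝ)..v, Xinv hf x
      = ∫ x in v..v', Xinv hf x :=
    intervalIntegral.integral_interval_sub_left (hint 0 v') (hint 0 v)
  have h2 : (∫ y in v..v', (Xinv hf y - u))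
      = (∫ y in v..v', Xinv hf y) - (v' - v) • u := by
    rw [intervalIntegral.integral_sub (hint v v') intervalIntegrable_const,
      intervalIntegral.integral_const]
  rw [h2, smul_eq_mul]
  unfold Pot
  linarith [h1]

lemma coordKey (h : ℝ → ℝ) (hh : MemX h) {p q : ℝ} (hp : p ∈ Icc (0:ℝ) 1)
    (hq : q ∈ Icc (0:ℝ) 1) :
    p ∈ Icc (lm h q) (rm h q) ↔
      ∀ p' ∈ Icc (0:ℝ) 1, 0 ≤ ∫ x in p..p', (Xinv h x - q) := by
  rw [mem_Icc, lemM (Xinv h) (Xinv_mono h) hp, claimA h hh hp hq, claimB h hh hp hq,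
    and_comm]

/-- **Crossing points are exactly the coordinatewise minimizers of the potential.** -/
theorem crossing_iff_coordinatewise_min
    (hf hg : ℝ → ℝ) (hhf : MemX hf) (hhg : MemX hg)
    (u v : ℝ) (hu : u ∈ Icc (0:ℝ) 1) (hv : v ∈ Icc (0:ℝ) 1) :
    IsCrossing hf hg u v ↔
      ((∀ u' ∈ Icc (0:ℝ) 1, Pot hf hg u v ≤ Pot hf hg u' v) ∧
        (∀ v' ∈ Icc (0:ℝ) 1, Pot hf hg u v ≤ Pot hf hg u v')) := by
  constructor
  · rintro ⟨_, _, hcu, hcv⟩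
    constructor
    · intro u' hu'
      have h1 := (coordKey hg hhg hu hv).1 hcu u' hu'
      have hd := pot_diff_u hf hg u u' v
      linarith
    · intro v' hv'
      have h1 := (coordKey hf hhf hv hu).1 hcv v' hv'
      have hd := pot_diff_v hf hg u v v'
      linarith
  · rintro ⟨H1, H2⟩
    refine ⟨hu, hv, ?_, ?_⟩
    · refine (coordKey hg hhg hu hv).2 (fun u' hu' => ?_)
      have h1 := H1 u' hu'
      have hd := pot_diff_u hf hg u u' v
      linarith
    · refine (coordKey hf hhf hv hu).2 (fun v' hv' => ?_)
      have h1 := H2 v' hv'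
      have hd := pot_diff_v hf hg u v v'
      linarith
end
end
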